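/- arXiv:1103.2040 — 4 statements merged into one kernel-verified Lean document; each statement's English description precedes it below -/
import Mathlib

section
/- The vector η = (√2, 0, √2, 0, 1, 1, 0, 0) in coordinates (Y₀,Y₁,Y₂,Y₃,X₀,X₁,X₂,X₃) satisfies the four quadric equations q₀ = q₁ = q₂ = q₃ = 0, and the 4×8 Jacobian matrix (∂qᵢ/∂(coordinate)) evaluated at η has rank exactly 3; hence the point [η] (the standard node) is a singular point of 𝒳. -/
noncomputable section

open Matrix

/-- Sign matrix: the coefficient of `Xₖ²` in the quadric `qᵢ` is `sgn i k`. -/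
def sgn : Matrix (Fin 4) (Fin 4) ℂ := !![1,1,1,1; 1,-1,1,-1; 1,1,-1,-1; 1,-1,-1,1]

/-- The coordinate `Yᵢ` of a vector `v ∈ ℂ⁸`. -/
def yIdx (k : Fin 4) : Fin 8 := ⟨k, by omega⟩
/-- The coordinate `Xᵢ` of a vector `v ∈ ℂ⁸`. -/
def xIdx (k : Fin 4) : Fin 8 := ⟨(k : ℕ) + 4, by omega⟩

/-- The four quadrics `qᵢ = Yᵢ² − Σₖ sgn i k · Xₖ²` defining `𝒳`. -/
def quadric (i : Fin 4) (v : Fin 8 → ℂ) : ℂ :=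
  v (yIdx i) ^ 2 - ∑ k : Fin 4, sgn i k * v (xIdx k) ^ 2

/-- The `4×8` Jacobian matrix of the four quadrics at `v`:
`∂qᵢ/∂Yⱼ = 2Yᵢ` if `j = i` (and `0` otherwise), `∂qᵢ/∂Xₖ = −2·sgn i k·Xₖ`. -/
def jacQ (v : Fin 8 → ℂ) : Matrix (Fin 4) (Fin 8) ℂ :=
  Matrix.of fun i j =>
    if hj : (j : ℕ) < 4 then (if (j : ℕ) = (i : ℕ) then 2 * v j else 0)
    else (-2) * sgn i ⟨(j : ℕ) - 4, by omega⟩ * v j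


/-- The standard node `η = (√2,0,√2,0,1,1,0,0)`. -/
def etaNode : Fin 8 → ℂ := ![(Real.sqrt 2 : ℂ), 0, (Real.sqrt 2 : ℂ), 0, 1, 1, 0, 0]

lemma sqrt2_sq : ((Real.sqrt 2 : ℝ) : ℂ) ^ 2 = 2 := by
  rw [← Complex.ofReal_pow, Real.sq_sqrt (by norm_num : (0:ℝ) ≤ 2)]
  norm_num

lemma sqrt2_ne : ((Real.sqrt 2 : ℝ) : ℂ) ≠ 0 := by
  intro h
  have := sqrt2_sq
  rw [h] at this
  norm_num at this

lemma mulVec_jacQ (v : Fin 8 → ℂ) : (jacQ etaNode).mulVec v =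
    ![2*(Real.sqrt 2:ℂ)*v 0 - 2*v 4 - 2*v 5, -2*v 4 + 2*v 5,
      2*(Real.sqrt 2:ℂ)*v 2 - 2*v 4 - 2*v 5, -2*v 4 + 2*v 5] := by
  funext i
  fin_cases i <;>
    simp [jacQ, sgn, mulVec, dotProduct, Fin.sum_univ_eight,
      show ((4:Fin 8):ℕ) = 4 from rfl, show ((5:Fin 8):ℕ) = 5 from rfl,
      show ((6:Fin 8):ℕ) = 6 from rfl, show ((7:Fin 8):ℕ) = 7 from rfl,
      show ((3:Fin 4):ℕ) = 3 from rfl,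
      show etaNode 0 = (Real.sqrt 2:ℂ) from rfl, show etaNode 1 = 0 from rfl,
      show etaNode 2 = (Real.sqrt 2:ℂ) from rfl, show etaNode 3 = 0 from rfl,
      show etaNode 4 = 1 from rfl, show etaNode 5 = 1 from rfl,
      show etaNode 6 = 0 from rfl, show etaNode 7 = 0 from rfl,
      show (⟨0,by omega⟩:Fin 4) = 0 from rfl,
      show (⟨1,by omega⟩:Fin 4) = 1 from rfl, show (⟨2,by omega⟩:Fin 4) = 2 from rfl,
      show (⟨3,by omega⟩:Fin 4) = 3 from rfl] <;> ring

/-- `η` satisfies the four quadric equations and the Jacobian at `η` has rank exactly `3`;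
hence the standard node `[η]` is a singular point of `𝒳`. -/
theorem statement5 :
    (∀ i : Fin 4, quadric i etaNode = 0) ∧ (jacQ etaNode).rank = 3 := by
  constructor
  · intro i
    fin_cases i <;>
      simp [quadric, sgn, etaNode, yIdx, xIdx, Fin.sum_univ_four, sqrt2_sq] <;> ring_nf
  · set φ : (Fin 4 → ℂ) →ₗ[ℂ] ℂ :=
      (LinearMap.proj (3 : Fin 4) : (Fin 4 → ℂ) →ₗ[ℂ] ℂ) - LinearMap.proj (1 : Fin 4) with hφdef
    have key : LinearMap.range (jacQ etaNode).mulVecLin = LinearMap.ker φ := by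
      apply le_antisymm
      · rintro w ⟨v, rfl⟩
        simp [hφdef, LinearMap.mem_ker, mulVecLin_apply, mulVec_jacQ]
      · intro w hw
        simp only [hφdef, LinearMap.mem_ker, LinearMap.sub_apply, LinearMap.proj_apply,
          sub_eq_zero] at hw
        set u : Fin 8 → ℂ := ![w 0 / (2 * (Real.sqrt 2 : ℂ)), 0, w 2 / (2 * (Real.sqrt 2 : ℂ)), 0,
          -w 1 / 4, w 1 / 4, 0, 0] with hu
        have h0 : u 0 = w 0 / (2 * (Real.sqrt 2 : ℂ)) := rfl
        have h2 : u 2 = w 2 / (2 * (Real.sqrt 2 : ℂ)) := rfl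
        have h4 : u 4 = -w 1 / 4 := rfl
        have h5 : u 5 = w 1 / 4 := rfl
        refine ⟨u, ?_⟩
        rw [mulVecLin_apply, mulVec_jacQ]
        funext i
        fin_cases i <;>
          · simp [h0, h2, h4, h5, hw]
            field_simp [sqrt2_ne]
            try ring
    have hφtop : LinearMap.range φ = ⊤ := by
      rw [LinearMap.range_eq_top]
      intro c
      exact ⟨Pi.single 3 c, by simp [hφdef, Pi.single_apply]⟩
    have hfr := LinearMap.finrank_range_add_finrank_ker φ
    rw [hφtop, finrank_top, Module.finrank_fin_fun, Module.finrank_self] at hfr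
    show Module.finrank ℂ (LinearMap.range (jacQ etaNode).mulVecLin) = 3
    rw [key]
    omega
end
end

section
/- Let R := ℂ[z₁,z₂,z₃,z₄]/(z₁z₄ − z₂z₃) be the coordinate ring of the affine quadric cone and let p ⊂ R be the ideal generated by the images of z₁ and z₂. Then p is a prime ideal, and for every n ≥ 1 the ordinary power pⁿ equals the n-th symbolic power of p: for every f ∈ R, if there exists s ∈ R with s ∉ p and s·f ∈ pⁿ, then f ∈ pⁿ (equivalently, pⁿ is a p-primary ideal). -/
noncomputable section
set_option synthInstance.maxHeartbeats 800000

open MvPolynomial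

/-- The coordinate ring `R = ℂ[z₁,z₂,z₃,z₄]/(z₁z₄ − z₂z₃)` of the affine quadric cone. -/
abbrev ConeRing : Type :=
  MvPolynomial (Fin 4) ℂ ⧸
    Ideal.span {(X 0 * X 3 - X 1 * X 2 : MvPolynomial (Fin 4) ℂ)}

/-- The ideal `p = (z₁, z₂)` of `R`, corresponding to the prime divisor
`z₁ = z₂ = 0` on the cone. -/
def pIdeal : Ideal ConeRing :=
  Ideal.span {Ideal.Quotient.mk _ (X 0), Ideal.Quotient.mk _ (X 1)}

/-!
Give `z₁, z₂` weight one and `z₃, z₄` weight zero. The quadric is homogeneous, so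
`f(z) ↦ f(t z₁, t z₂, z₃, z₄)` is a ring map `φ : R → R[t]`; it is a section of `t ↦ 1`
with values in the Rees algebra `⊕ pᵏ tᵏ`, and it sends `p` into `t R[t]`. For such a map,
`f ∈ pⁿ` iff `tⁿ ∣ φ f`. Since `z₁z₄ − z₂z₃` has degree one in `z₁` with coprime
coefficients `z₄` and `z₂z₃`, it is irreducible and `R` is a domain; so `t` is prime in
`R[t]`, and both claims follow: `p` is the preimage of `(t)`, and `tⁿ ∣ φ(s) φ(f)` with
`t ∤ φ(s)` forces `tⁿ ∣ φ(f)`.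
-/

namespace Ideal

variable {R : Type*} [CommRing R]

structure IsReesSection (I : Ideal R) (φ : R →+* Polynomial R) : Prop where
  mem_reesAlgebra (r : R) : φ r ∈ reesAlgebra I
  eval_one (r : R) : (φ r).eval 1 = r
  X_dvd_of_mem {r : R} : r ∈ I → Polynomial.X ∣ φ r

namespace IsReesSection

variable {I : Ideal R} {φ : R →+* Polynomial R}

theorem X_pow_dvd_of_mem_pow (h : I.IsReesSection φ) {n : ℕ} {r : R} (hr : r ∈ I ^ n) :
    Polynomial.X ^ n ∣ φ r := by
  have hI : I.map φ ≤ span {Polynomial.X} :=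
    map_le_iff_le_comap.mpr fun r hr => mem_span_singleton.mpr (h.X_dvd_of_mem hr)
  rw [← mem_span_singleton, ← span_singleton_pow]
  exact pow_right_mono hI n (Ideal.map_pow φ I n ▸ mem_map_of_mem φ hr)

theorem mem_pow_of_X_pow_dvd (h : I.IsReesSection φ) {n : ℕ} {r : R}
    (hr : Polynomial.X ^ n ∣ φ r) : r ∈ I ^ n := by
  obtain ⟨q, hq⟩ := hr
  -- `r = (φ r)(1)` is the sum of the coefficients of `q = φ r / tⁿ`, and `q.coeff i ∈ Iⁱ⁺ⁿ`.
  have hcoeff (i : ℕ) : q.coeff i ∈ I ^ n := by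
    have := (mem_reesAlgebra_iff I _).mp (h.mem_reesAlgebra r) (i + n)
    rw [hq, Polynomial.coeff_X_pow_mul] at this
    exact pow_le_pow_right (Nat.le_add_left n i) this
  rw [← h.eval_one r, hq, Polynomial.eval_mul, Polynomial.eval_pow, Polynomial.eval_X, one_pow,
    one_mul, Polynomial.eval_eq_sum_range]
  exact _root_.sum_mem fun i _ => by simpa using hcoeff i

theorem mem_pow_iff (h : I.IsReesSection φ) {n : ℕ} {r : R} :
    r ∈ I ^ n ↔ Polynomial.X ^ n ∣ φ r :=
  ⟨h.X_pow_dvd_of_mem_pow, h.mem_pow_of_X_pow_dvd⟩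

theorem isPrime [IsDomain R] (h : I.IsReesSection φ) : I.IsPrime := by
  have hI : I = (span {Polynomial.X}).comap φ := by
    ext r
    simpa [mem_span_singleton] using h.mem_pow_iff (n := 1) (r := r)
  have : (span {(Polynomial.X : Polynomial R)}).IsPrime :=
    (span_singleton_prime Polynomial.X_ne_zero).mpr Polynomial.prime_X
  exact hI ▸ comap_isPrime φ _

theorem mem_pow_of_mul_mem_pow [IsDomain R] (h : I.IsReesSection φ) {n : ℕ} {s f : R}
    (hs : s ∉ I) (hsf : s * f ∈ I ^ n) : f ∈ I ^ n := by
  have hX : ¬ Polynomial.X ∣ φ s :=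
    fun hX => hs (pow_one I ▸ h.mem_pow_of_X_pow_dvd (by rwa [pow_one]))
  rw [h.mem_pow_iff, map_mul] at hsf
  exact h.mem_pow_iff.mpr (Polynomial.prime_X.pow_dvd_of_dvd_mul_left n hX hsf)

end IsReesSection

end Ideal

theorem irreducible_X_zero_mul_X_three_sub (K : Type*) [Field K] :
    Irreducible (X 0 * X 3 - X 1 * X 2 : MvPolynomial (Fin 4) K) := by
  have hmap : finSuccEquiv K 3 (X 0 * X 3 - X 1 * X 2) =
      Polynomial.C (X 2) * Polynomial.X + Polynomial.C (-(X 0 * X 1)) := by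
    have h1 : (1 : Fin 4) = Fin.succ 0 := rfl
    have h2 : (2 : Fin 4) = Fin.succ 1 := rfl
    have h3 : (3 : Fin 4) = Fin.succ 2 := rfl
    rw [h1, h2, h3]
    simp only [map_sub, map_mul, finSuccEquiv_X_zero, finSuccEquiv_X_succ, map_neg]
    ring
  rw [← MulEquiv.irreducible_iff (finSuccEquiv K 3), hmap]
  refine Polynomial.irreducible_C_mul_X_add_C (X_ne_zero 2) ?_
  refine X_prime.irreducible.isRelPrime_iff_not_dvd.mpr fun hdvd => ?_
  rcases X_prime.dvd_mul.mp (dvd_neg.mp hdvd) with h | h <;> simp [X_dvd_X] at h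

instance : IsDomain ConeRing :=
  have h := irreducible_X_zero_mul_X_three_sub ℂ
  (Ideal.Quotient.isDomain_iff_prime _).mpr ((Ideal.span_singleton_prime h.ne_zero).mpr h.prime)

def coneScaling : ConeRing →ₐ[ℂ] Polynomial ConeRing :=
  Ideal.Quotient.liftₐ _
    (aeval fun i => Polynomial.monomial (![1, 1, 0, 0] i) (Ideal.Quotient.mk _ (X i) : ConeRing))
    (fun a ha => by
      obtain ⟨c, rfl⟩ := Ideal.mem_span_singleton'.mp ha
      have hq : (Ideal.Quotient.mk _ (X 0 * X 3 - X 1 * X 2) : ConeRing) = 0 :=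
        Ideal.Quotient.eq_zero_iff_mem.mpr (Ideal.mem_span_singleton_self _)
      rw [map_mul]
      refine mul_eq_zero_of_right _ ?_
      simp only [map_sub, map_mul, aeval_X, Matrix.cons_val_zero, Matrix.cons_val_one,
        Matrix.cons_val, Polynomial.monomial_zero_left, Polynomial.monomial_mul_C]
      rw [← map_sub, ← map_mul, ← map_mul, ← map_sub, hq, map_zero])

theorem coneScaling_mk_C (a : ℂ) :
    coneScaling (Ideal.Quotient.mk _ (C a)) = Polynomial.C (Ideal.Quotient.mk _ (C a) : ConeRing) :=
  coneScaling.commutes a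

theorem coneScaling_mk_X (i : Fin 4) :
    coneScaling (Ideal.Quotient.mk _ (X i)) =
      Polynomial.monomial (![1, 1, 0, 0] i) (Ideal.Quotient.mk _ (X i) : ConeRing) :=
  aeval_X _ i

theorem pIdeal_isReesSection :
    pIdeal.IsReesSection (coneScaling : ConeRing →+* Polynomial ConeRing) where
  mem_reesAlgebra r := by
    obtain ⟨F, rfl⟩ := Ideal.Quotient.mk_surjective r
    induction F using MvPolynomial.induction_on with
    | C a =>
      rw [AlgHom.coe_toRingHom, coneScaling_mk_C]
      exact (reesAlgebra pIdeal).algebraMap_mem _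
    | add p q hp hq => simpa using add_mem hp hq
    | mul_X p i hp =>
      rw [map_mul, AlgHom.coe_toRingHom, map_mul, coneScaling_mk_X]
      refine mul_mem hp (reesAlgebra.monomial_mem.mpr ?_)
      fin_cases i <;> simp [pIdeal, Submodule.mem_span_of_mem]
  eval_one r := by
    have : (Polynomial.evalRingHom 1).comp (coneScaling : ConeRing →+* Polynomial ConeRing) =
        RingHom.id _ :=
      Ideal.Quotient.ringHom_ext <| MvPolynomial.ringHom_ext
        (fun a => by simp [coneScaling_mk_C]) (fun i => by simp [coneScaling_mk_X])
    exact DFunLike.congr_fun this r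
  X_dvd_of_mem {r} hr := by
    rw [← Ideal.mem_span_singleton]
    refine (Ideal.span_le (I := (Ideal.span {Polynomial.X}).comap _)).mpr ?_ hr
    rintro _ (rfl | rfl) <;>
      simp [coneScaling_mk_X, Ideal.mem_span_singleton, Polynomial.X_dvd_iff]

/-- `p` is prime, and for every `n ≥ 1` the ordinary power `pⁿ` equals the `n`-th
symbolic power of `p`: if `s ∉ p` and `s·f ∈ pⁿ` then `f ∈ pⁿ`. -/
theorem statement7 :
    pIdeal.IsPrime ∧
    ∀ n : ℕ, 1 ≤ n → ∀ f s : ConeRing, s ∉ pIdeal → s * f ∈ pIdeal ^ n →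
      f ∈ pIdeal ^ n :=
  ⟨pIdeal_isReesSection.isPrime,
    fun _ _ _ _ hs hsf => pIdeal_isReesSection.mem_pow_of_mul_mem_pow hs hsf⟩
end
end

section
/- Let n ≥ 1 be a natural number and let Y be a real symmetric positive definite 2×2 matrix. Then the family H ↦ exp(−2π·σ(HY)), indexed by the set of integral symmetric 2×2 matrices H with det H = −n and σ(H) ≥ 0, is summable (the series Σ_H exp(−2π·σ(HY)) converges). -/
/-!
Write `H = !![a, b; b, c]`, so that `b² = ac + n` and `a + c ≥ 0`, and put `s = √n`.
Then `det (H + s) = s σ(H)` and `σ(H + s) ≥ 0`, so `H + s` is positive semidefinite; likewise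
`Y - δ` is positive semidefinite for `δ = det Y / σ(Y)`, since `det (Y - δ) = δ²`. The trace
of a product of positive semidefinite matrices is nonnegative, so `σ(HY) ≥ δ σ(H) - s σ(Y)`,
and positivity of `H + s` gives `∑ |H i j| ≤ 2 σ(H) + 8 s`. Hence each term of the series is
at most a constant times `exp (-π δ ∑ |H i j|)`, which is summable over all integer matrices.
-/

noncomputable section

open Matrix Real

/-- The indexing set: integral symmetric `2×2` matrices `H` with `det H = −n`
and `σ(H) ≥ 0`. -/
def IdxSet (n : ℕ) : Type :=
  {H : Matrix (Fin 2) (Fin 2) ℤ // H.IsSymm ∧ H.det = -(n : ℤ) ∧ 0 ≤ H.trace}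

open scoped MatrixOrder ComplexOrder

lemma summable_pi_prod_of_nonneg {ι α : Type*} [Fintype ι] {g : α → ℝ}
    (hg0 : ∀ a, 0 ≤ g a) (hg : Summable g) : Summable fun v : ι → α => ∏ i, g (v i) := by
  suffices h : ∀ k, Summable fun v : Fin k → α => ∏ i, g (v i) by
    let e := (Fintype.equivFin ι).arrowCongr (Equiv.refl α)
    rw [← e.symm.summable_iff]
    convert h (Fintype.card ι) using 2 with v
    exact Fintype.prod_equiv (Fintype.equivFin ι) _ _ fun i => rfl
  intro k
  induction k with
  | zero => exact .of_finite
  | succ k ih =>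
    rw [← (Fin.consEquiv fun _ => α).summable_iff]
    simpa [Function.comp_def, Fin.prod_univ_succ] using
      hg.mul_of_nonneg ih hg0 fun v => Finset.prod_nonneg fun i _ => hg0 (v i)

lemma Int.summable_exp_neg_mul_abs {κ : ℝ} (hκ : 0 < κ) :
    Summable fun k : ℤ => exp (-κ * |(k : ℝ)|) := by
  have h : Summable fun k : ℕ => exp (k * -κ) := Real.summable_exp_nat_mul_iff.mpr (by linarith)
  refine .of_nat_of_neg ?_ ?_ <;> simpa [mul_comm] using h

lemma summable_exp_neg_mul_sum_abs {m n : Type*} [Fintype m] [Fintype n] {κ : ℝ} (hκ : 0 < κ) :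
    Summable fun H : Matrix m n ℤ => exp (-κ * ∑ i, ∑ j, |(H i j : ℝ)|) := by
  have hrow := summable_pi_prod_of_nonneg (ι := n) (fun _ => (exp_pos _).le)
    (Int.summable_exp_neg_mul_abs hκ)
  refine (summable_pi_prod_of_nonneg (ι := m)
    (fun v => Finset.prod_nonneg fun _ _ => (exp_pos _).le) hrow).congr fun H => ?_
  simp only [Finset.mul_sum, Real.exp_sum]

namespace Matrix

variable {n : Type*} [Fintype n]

lemma PosSemidef.trace_mul_nonneg {𝕜 : Type*} [RCLike 𝕜] {A B : Matrix n n 𝕜}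
    (hA : A.PosSemidef) (hB : B.PosSemidef) : 0 ≤ (A * B).trace := by
  classical
  have hS : (CFC.sqrt A)ᴴ = CFC.sqrt A := (CFC.sqrt_nonneg A).isSelfAdjoint.star_eq
  have h := (hB.mul_mul_conjTranspose_same (CFC.sqrt A)).trace_nonneg
  rwa [hS, trace_mul_cycle, CFC.sqrt_mul_sqrt_self A hA.nonneg] at h

lemma PosSemidef.two_mul_abs_apply_le {P : Matrix n n ℝ} (hP : P.PosSemidef) (i j : n) :
    2 * |P i j| ≤ P i i + P j j := by
  classical
  have hsymm : P j i = P i j := hP.isHermitian.apply i j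
  have hquad (t : ℝ) : 0 ≤ P i i + 2 * t * P i j + t ^ 2 * P j j := by
    have := (posSemidef_iff_dotProduct_mulVec.mp hP).2 (Pi.single i 1 + t • Pi.single j 1)
    simp only [star_trivial, mulVec_add, mulVec_single, MulOpposite.op_one, one_smul, mulVec_smul,
      dotProduct_add, add_dotProduct, single_dotProduct, col_apply, one_mul, smul_dotProduct, hsymm,
      smul_eq_mul, dotProduct_smul] at this
    linarith
  rcases abs_cases (P i j) with ⟨h, -⟩ | ⟨h, -⟩ <;> linarith [hquad 1, hquad (-1)]

lemma PosSemidef.sum_abs_apply_le {P : Matrix n n ℝ} (hP : P.PosSemidef) :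
    ∑ i, ∑ j, |P i j| ≤ Fintype.card n * P.trace := by
  have h := Finset.sum_le_sum fun i (_ : i ∈ Finset.univ) =>
    Finset.sum_le_sum fun j (_ : j ∈ Finset.univ) => hP.two_mul_abs_apply_le i j
  simp only [Finset.sum_add_distrib, Finset.sum_const, Finset.card_univ, nsmul_eq_mul,
    ← Finset.mul_sum] at h
  simp only [trace, diag_apply]
  linarith

variable [DecidableEq n]

lemma sum_abs_apply_le_of_posSemidef_add_smul_one {H : Matrix n n ℝ} {s : ℝ} (hs : 0 ≤ s)
    (hH : (H + s • 1).PosSemidef) :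
    ∑ i, ∑ j, |H i j| ≤ Fintype.card n * H.trace + 2 * Fintype.card n ^ 2 * s := by
  have hentry (i j : n) : |H i j| ≤ |(H + s • 1) i j| + s := by
    have : |(s • 1 : Matrix n n ℝ) i j| ≤ s := by
      rcases eq_or_ne i j with rfl | hij <;> simp [*, abs_of_nonneg hs]
    calc |H i j| = |(H + s • 1) i j - (s • 1 : Matrix n n ℝ) i j| := by simp
      _ ≤ |(H + s • 1) i j| + |(s • 1 : Matrix n n ℝ) i j| := abs_sub _ _
      _ ≤ _ := by linarith
  have hP := hH.sum_abs_apply_le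
  rw [trace_add, trace_smul, trace_one, smul_eq_mul, mul_comm s] at hP
  calc ∑ i, ∑ j, |H i j| ≤ ∑ i, ∑ j, (|(H + s • 1) i j| + s) :=
        Finset.sum_le_sum fun i _ => Finset.sum_le_sum fun j _ => hentry i j
    _ = ∑ i, ∑ j, |(H + s • 1) i j| + Fintype.card n ^ 2 * s := by
        simp [Finset.sum_add_distrib, Finset.sum_const, sq, mul_assoc]
    _ ≤ _ := by linarith

lemma sub_le_trace_mul_of_posSemidef {H Y : Matrix n n ℝ} {s δ : ℝ} (hs : 0 ≤ s)
    (hδ : 0 ≤ δ) (hH : (H + s • 1).PosSemidef) (hY : (Y - δ • 1).PosSemidef) :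
    δ * H.trace - s * Y.trace ≤ (H * Y).trace := by
  have h := hH.trace_mul_nonneg hY
  simp only [add_mul, mul_sub, smul_mul, Matrix.mul_smul, Matrix.one_mul, Matrix.mul_one,
    trace_add, trace_sub, trace_smul, trace_one, smul_eq_mul] at h
  nlinarith [mul_nonneg (mul_nonneg hs hδ) (Nat.cast_nonneg (α := ℝ) (Fintype.card n))]

lemma det_add_smul_one_fin_two {R : Type*} [CommRing R] (M : Matrix (Fin 2) (Fin 2) R) (t : R) :
    (M + t • 1).det = M.det + t * M.trace + t ^ 2 := by
  simp only [det_fin_two, trace_fin_two, add_apply, smul_apply, one_apply_eq, ne_eq, zero_ne_one,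
    one_ne_zero, not_false_eq_true, one_apply_ne, smul_eq_mul, mul_one, mul_zero, add_zero]
  ring

lemma posSemidef_fin_two_of_trace_nonneg_of_det_nonneg {M : Matrix (Fin 2) (Fin 2) ℝ}
    (hM : M.IsSymm) (htr : 0 ≤ M.trace) (hdet : 0 ≤ M.det) : M.PosSemidef := by
  have h10 : M 1 0 = M 0 1 := hM.apply 0 1
  rw [trace_fin_two] at htr
  rw [det_fin_two, h10] at hdet
  have h0 : 0 ≤ M 0 0 := by nlinarith [sq_nonneg (M 0 1)]
  have h1 : 0 ≤ M 1 1 := by nlinarith [sq_nonneg (M 0 1)]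
  refine posSemidef_iff_dotProduct_mulVec.mpr ⟨isHermitian_iff_isSymm.mpr hM, fun x => ?_⟩
  simp only [star_trivial, dotProduct, mulVec, Fin.sum_univ_two, h10]
  rcases h0.eq_or_lt with h0 | h0
  · have : M 0 1 = 0 := by nlinarith [sq_nonneg (M 0 1)]
    simp only [← h0, this]
    nlinarith [sq_nonneg (x 1)]
  · refine nonneg_of_mul_nonneg_right ?_ h0
    nlinarith [sq_nonneg (M 0 0 * x 0 + M 0 1 * x 1), mul_nonneg hdet (sq_nonneg (x 1))]

lemma posSemidef_add_smul_one_of_det_eq_neg_sq {H : Matrix (Fin 2) (Fin 2) ℝ} (hH : H.IsSymm)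
    {s : ℝ} (hs : 0 ≤ s) (hdet : H.det = -s ^ 2) (htr : 0 ≤ H.trace) :
    (H + s • 1).PosSemidef := by
  refine posSemidef_fin_two_of_trace_nonneg_of_det_nonneg (hH.add (isSymm_one.smul s)) ?_ ?_
  · simp only [trace_add, trace_smul, trace_one, Fintype.card_fin, Nat.cast_ofNat, smul_eq_mul]
    positivity
  · rw [det_add_smul_one_fin_two, hdet]
    nlinarith

lemma PosDef.posSemidef_sub_det_div_trace_smul_one {Y : Matrix (Fin 2) (Fin 2) ℝ}
    (hY : Y.PosDef) : (Y - (Y.det / Y.trace) • 1).PosSemidef := by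
  have htr := hY.trace_pos
  have h10 : Y 1 0 = Y 0 1 := hY.isHermitian.apply 0 1
  rw [sub_eq_add_neg, ← neg_smul]
  have hsymm : Y.IsSymm := isHermitian_iff_isSymm.mp hY.isHermitian
  refine posSemidef_fin_two_of_trace_nonneg_of_det_nonneg (hsymm.add (isSymm_one.smul _)) ?_ ?_
  · have hdet : 2 * Y.det ≤ Y.trace ^ 2 := by
      rw [det_fin_two, trace_fin_two, h10]
      nlinarith [sq_nonneg (Y 0 0 - Y 1 1), sq_nonneg (Y 0 1)]
    have : 2 * (Y.det / Y.trace) ≤ Y.trace := by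
      rw [mul_div_assoc', div_le_iff₀ htr]; nlinarith
    simp only [trace_add, trace_smul, trace_one, Fintype.card_fin, smul_eq_mul]
    push_cast
    linarith
  · rw [det_add_smul_one_fin_two, neg_mul, div_mul_cancel₀ _ htr.ne', add_neg_cancel, zero_add]
    positivity

lemma le_trace_mul_of_det_eq_neg_sq {H Y : Matrix (Fin 2) (Fin 2) ℝ} (hH : H.IsSymm) {s : ℝ}
    (hs : 0 ≤ s) (hdet : H.det = -s ^ 2) (htr : 0 ≤ H.trace) (hY : Y.PosDef) :
    Y.det / Y.trace / 2 * ∑ i, ∑ j, |H i j| - s * (Y.trace + 4 * (Y.det / Y.trace)) ≤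
      (H * Y).trace := by
  have hδ : 0 < Y.det / Y.trace := div_pos hY.det_pos hY.trace_pos
  have hHs := posSemidef_add_smul_one_of_det_eq_neg_sq hH hs hdet htr
  have hlow := sub_le_trace_mul_of_posSemidef hs hδ.le hHs hY.posSemidef_sub_det_div_trace_smul_one
  have habs := sum_abs_apply_le_of_posSemidef_add_smul_one hs hHs
  simp only [Fintype.card_fin, Nat.cast_ofNat] at habs
  nlinarith [mul_le_mul_of_nonneg_left habs hδ.le]

end Matrix

theorem statement8_general (n : ℕ) (Y : Matrix (Fin 2) (Fin 2) ℝ)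
    (hY : Y.PosDef) :
    Summable fun H : IdxSet n =>
      Real.exp (-(2 * π) * ((H.val.map (Int.cast : ℤ → ℝ)) * Y).trace) := by
  set δ := Y.det / Y.trace
  set C := √(n : ℝ) * (Y.trace + 4 * δ)
  have hδ : 0 < δ := div_pos hY.det_pos hY.trace_pos
  have hbound (H : IdxSet n) :
      Real.exp (-(2 * π) * ((H.val.map (Int.cast : ℤ → ℝ)) * Y).trace) ≤
        Real.exp (2 * π * C) * Real.exp (-(π * δ) * ∑ i, ∑ j, |(H.val i j : ℝ)|) := by
    obtain ⟨H, hsymm, hdet, htr⟩ := H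
    have hdet' : (H.map (Int.cast : ℤ → ℝ)).det = -√(n : ℝ) ^ 2 := by
      rw [← Int.cast_det, hdet, Real.sq_sqrt (Nat.cast_nonneg n)]; push_cast; rfl
    have htr' : 0 ≤ (H.map (Int.cast : ℤ → ℝ)).trace := by
      have h : ((H.trace : ℤ) : ℝ) = (H.map (Int.cast : ℤ → ℝ)).trace :=
        AddMonoidHom.map_trace (Int.castAddHom ℝ) H
      exact h ▸ Int.cast_nonneg_iff.mpr htr
    have hlow := le_trace_mul_of_det_eq_neg_sq (hsymm.map _) (Real.sqrt_nonneg _) hdet' htr' hY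
    simp only [map_apply] at hlow
    rw [← Real.exp_add, Real.exp_le_exp]
    nlinarith [mul_le_mul_of_nonneg_left hlow (by positivity : (0 : ℝ) ≤ 2 * π)]
  exact ((summable_exp_neg_mul_sum_abs (by positivity)).comp_injective Subtype.val_injective
    |>.mul_left _).of_nonneg_of_le (fun _ => (Real.exp_pos _).le) hbound

/-- For `n ≥ 1` and `Y` symmetric positive definite, the series
`Σ_H exp(−2π σ(HY))` over integral symmetric `H` with `det H = −n`, `σ(H) ≥ 0`
converges. -/
theorem statement8 (n : ℕ) (hn : 1 ≤ n) (Y : Matrix (Fin 2) (Fin 2) ℝ)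
    (hY : Y.PosDef) :
    Summable fun H : IdxSet n =>
      Real.exp (-(2 * π) * ((H.val.map (Int.cast : ℤ → ℝ)) * Y).trace) :=
  statement8_general n Y hY
end
end

section
/- Let U ∈ GL(2,ℤ) and let n ≥ 1 be a natural number. Then there exist only finitely many integral symmetric 2×2 matrices T with det T = −n and ε(T) ≠ ε(ᵗU T U), where ε(T) := +1 if σ(T) ≥ 0 and ε(T) := −1 otherwise; that is, the set of such T for which exactly one of σ(T) ≥ 0 and σ(ᵗU T U) ≥ 0 holds is finite. -/
open Matrix

private lemma bnd9 (a t n M : ℤ) (hn : 1 ≤ n) (hM : 0 < M)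
    (h1 : -n ≤ a * (t - a)) (h2 : t ≤ M) : a ≤ M + 2 * n := by
  by_contra h
  push_neg at h
  have ha1 : 0 ≤ a - 1 := by linarith
  have ha2 : 0 ≤ a - t - 2 * n := by linarith
  nlinarith [mul_nonneg ha1 ha2]

set_option maxHeartbeats 1000000 in
private lemma key9 (a b c p q r n : ℤ) (hn : 1 ≤ n) (hp : 1 ≤ p) (hr : 1 ≤ r)
    (hd : p * r - q ^ 2 = 1) (hT : a * c - b ^ 2 = -n)
    (hsign : ¬(0 ≤ a + c ↔ 0 ≤ a * p + 2 * b * q + c * r)) :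
    |a| ≤ n * (p + r) + 2 * n ∧ |b| ≤ n * (p + r) + 2 * n ∧ |c| ≤ n * (p + r) + 2 * n := by
  have hs : 0 < p + r := by linarith
  have hident : (p + r) * (a + c) * (a * p + 2 * b * q + c * r) =
      (a * p - c * r) ^ 2 + (b * (p + r) + q * (a + c)) ^ 2 + (a + c) ^ 2 - n * (p + r) ^ 2 := by
    linear_combination (a + c) ^ 2 * hd + (p + r) ^ 2 * hT
  have htτ : (a + c) * (a * p + 2 * b * q + c * r) ≤ 0 := by
    by_cases h0 : 0 ≤ a + c
    · have : ¬ 0 ≤ a * p + 2 * b * q + c * r := fun h => hsign ⟨fun _ => h, fun _ => h0⟩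
      nlinarith
    · have : 0 ≤ a * p + 2 * b * q + c * r := by
        by_contra h
        exact hsign ⟨fun h1 => absurd h1 h0, fun h2 => absurd h2 h⟩
      nlinarith
  have ht2 : (a + c) ^ 2 ≤ n * (p + r) ^ 2 := by
    nlinarith [sq_nonneg (a * p - c * r), sq_nonneg (b * (p + r) + q * (a + c))]
  have hM : 0 < n * (p + r) := by positivity
  have ht2' : (a + c) ^ 2 ≤ (n * (p + r)) ^ 2 := by nlinarith [sq_nonneg (p + r)]
  have htu : a + c ≤ n * (p + r) := by
    by_contra h
    push_neg at h
    nlinarith [mul_pos hM (show (0:ℤ) < (a + c) - n * (p + r) by linarith)]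
  have htl : -(n * (p + r)) ≤ a + c := by
    by_contra h
    push_neg at h
    nlinarith [mul_pos hM (show (0:ℤ) < -(a + c) - n * (p + r) by linarith)]
  have hac : -n ≤ a * c := by nlinarith [sq_nonneg b]
  have ha1 : -n ≤ a * ((a + c) - a) := by linarith [hac]; 
  have hc1 : -n ≤ c * ((a + c) - c) := by nlinarith [hac]
  have hau : a ≤ n * (p + r) + 2 * n := bnd9 a (a + c) n (n * (p + r)) hn hM (by nlinarith) htu
  have hal : -a ≤ n * (p + r) + 2 * n := by
    have := bnd9 (-a) (-(a + c)) n (n * (p + r)) hn hM (by nlinarith) (by linarith)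
    linarith
  have hcu : c ≤ n * (p + r) + 2 * n := bnd9 c (a + c) n (n * (p + r)) hn hM (by nlinarith) htu
  have hcl : -c ≤ n * (p + r) + 2 * n := by
    have := bnd9 (-c) (-(a + c)) n (n * (p + r)) hn hM (by nlinarith) (by linarith)
    linarith
  have hb2 : 4 * b ^ 2 ≤ (a + c) ^ 2 + 4 * n := by nlinarith [sq_nonneg (a - c)]
  have hb : |b| ≤ n * (p + r) + 2 * n := by
    rw [abs_le]
    constructor
    · by_contra h
      push_neg at h
      nlinarith [ht2', hM]
    · by_contra h
      push_neg at h
      nlinarith [ht2', hM]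
  exact ⟨abs_le.mpr ⟨by linarith, hau⟩, hb, abs_le.mpr ⟨by linarith, hcu⟩⟩

/-- For `U ∈ GL(2,ℤ)` and `n ≥ 1`, there are only finitely many integral symmetric
`2×2` matrices `T` with `det T = −n` and `ε(T) ≠ ε(ᵗU T U)`, where `ε(T) = +1` iff
`σ(T) ≥ 0`; i.e. the set of such `T` for which exactly one of `σ(T) ≥ 0` and
`σ(ᵗU T U) ≥ 0` holds is finite. -/
theorem statement9 (U : Matrix (Fin 2) (Fin 2) ℤ) (hU : U.det = 1 ∨ U.det = -1)
    (n : ℕ) (hn : 1 ≤ n) :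
    {T : Matrix (Fin 2) (Fin 2) ℤ | T.IsSymm ∧ T.det = -(n : ℤ) ∧
      ¬(0 ≤ T.trace ↔ 0 ≤ (Uᵀ * T * U).trace)}.Finite := by
  have hd : (U 0 0 ^ 2 + U 0 1 ^ 2) * (U 1 0 ^ 2 + U 1 1 ^ 2)
      - (U 0 0 * U 1 0 + U 0 1 * U 1 1) ^ 2 = 1 := by
    have h1 : (U 0 0 ^ 2 + U 0 1 ^ 2) * (U 1 0 ^ 2 + U 1 1 ^ 2)
        - (U 0 0 * U 1 0 + U 0 1 * U 1 1) ^ 2 = U.det ^ 2 := by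
      rw [Matrix.det_fin_two]; ring
    rcases hU with h | h <;> rw [h1, h] <;> norm_num
  have hp : 1 ≤ U 0 0 ^ 2 + U 0 1 ^ 2 := by
    nlinarith [sq_nonneg (U 0 0 * U 1 0 + U 0 1 * U 1 1), sq_nonneg (U 0 0), sq_nonneg (U 1 0),
      sq_nonneg (U 0 1), sq_nonneg (U 1 1)]
  have hr : 1 ≤ U 1 0 ^ 2 + U 1 1 ^ 2 := by
    nlinarith [sq_nonneg (U 0 0 * U 1 0 + U 0 1 * U 1 1), sq_nonneg (U 0 0), sq_nonneg (U 1 0),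
      sq_nonneg (U 0 1), sq_nonneg (U 1 1)]
  set B : ℤ := (n : ℤ) * ((U 0 0 ^ 2 + U 0 1 ^ 2) + (U 1 0 ^ 2 + U 1 1 ^ 2)) + 2 * n with hB
  have hfin : {T : Matrix (Fin 2) (Fin 2) ℤ | ∀ i j, |T i j| ≤ B}.Finite := by
    apply Set.Finite.subset
      (Set.Finite.pi fun _ : Fin 2 => Set.Finite.pi fun _ : Fin 2 => Set.finite_Icc (-B) B)
    intro T hT
    simp only [Set.mem_pi, Set.mem_univ, forall_true_left, Set.mem_Icc]
    intro i j
    exact abs_le.mp (hT i j)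
  apply hfin.subset
  rintro T ⟨hsymm, hdet, hsign⟩
  have h10 : T 1 0 = T 0 1 := hsymm.apply 0 1
  have hdet2 : T 0 0 * T 1 1 - T 0 1 ^ 2 = -(n : ℤ) := by
    rw [← hdet, Matrix.det_fin_two, h10]; ring
  have htr : T.trace = T 0 0 + T 1 1 := Matrix.trace_fin_two T
  have hτeq : (Uᵀ * T * U).trace = T 0 0 * (U 0 0 ^ 2 + U 0 1 ^ 2)
      + 2 * T 0 1 * (U 0 0 * U 1 0 + U 0 1 * U 1 1) + T 1 1 * (U 1 0 ^ 2 + U 1 1 ^ 2) := by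
    simp only [Matrix.trace_fin_two, Matrix.mul_apply, Fin.sum_univ_two,
      Matrix.transpose_apply]
    rw [h10]; ring
  rw [htr, hτeq] at hsign
  obtain ⟨ha, hb, hc⟩ := key9 (T 0 0) (T 0 1) (T 1 1) _ _ _ n (by exact_mod_cast hn)
    hp hr hd hdet2 hsign
  simp only [Set.mem_setOf_eq]
  intro i j
  have hi : i = 0 ∨ i = 1 := by omega
  have hj : j = 0 ∨ j = 1 := by omega
  rcases hi with rfl | rfl <;> rcases hj with rfl | rfl
  · exact ha
  · exact hb
  · rw [h10]; exact hb
  · exact hc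
end
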